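/- Let α > 0 be the real root of ψ and set ψ'(α) = ∫₀^∞ t e^{-αt} d(P+Q)(t). Then each of the three functions m_f*(s) = (1-p*(s))(1-q*(s))/(s·ψ(s)), m_g*(s) = (1-p*(s))q*(s)/(s·ψ(s)), and n_f*(s) = (1-q*(s))p*(s)/(s·ψ(s)) has a simple pole at s = α: as s → α (s complex with Re(s) > 0, s ≠ α), (s-α)·m_f*(s) → p*(α)q*(α)/(α·ψ'(α)), (s-α)·m_g*(s) → q*(α)²/(α·ψ'(α)), and (s-α)·n_f*(s) → p*(α)²/(α·ψ'(α)). -/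

import Mathlib

/-!
Differentiating under the integral sign, `p*` and `q*` are holomorphic on `Re s > 0` with
`p*'(α) + q*'(α) = -∫ t e^{-αt} d(P+Q) = -ψ'(α)`, and `ψ'(α) > 0` because `P` and `Q` live on
`(0, ∞)`. Since `ψ(α) = 0`, the difference quotient gives `(s - α) / ψ(s) → 1 / ψ'(α)`; the
numerators are continuous at `α`, where `p*(α) + q*(α) = 1` turns `(1 - p*)(1 - q*)`,
`(1 - p*) q*` and `(1 - q*) p*` into `p* q*`, `q*²` and `p*²`.
-/

open MeasureTheory Set Filter Metric
open scoped Topology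

noncomputable def laplaceTransform (μ : Measure ℝ) (s : ℂ) : ℂ :=
  ∫ t, Complex.exp (-s * t) ∂μ

lemma Real.mul_exp_neg_mul_le_inv {β : ℝ} (hβ : 0 < β) (t : ℝ) :
    t * Real.exp (-β * t) ≤ β⁻¹ := by
  calc t * Real.exp (-β * t) = β⁻¹ * (β * t * Real.exp (-(β * t))) := by
        field_simp
    _ ≤ β⁻¹ * 1 := by
        gcongr
        exact (Real.mul_exp_neg_le_exp_neg_one _).trans (by simp)
    _ = β⁻¹ := mul_one _

lemma Complex.norm_exp_neg_mul_ofReal (s : ℂ) (t : ℝ) :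
    ‖Complex.exp (-s * t)‖ = Real.exp (-s.re * t) := by
  simp [Complex.norm_exp, Complex.mul_re]

section LaplaceTransform

variable {μ : Measure ℝ}

lemma ae_pos_of_measure_Iic_eq_zero (hμ : μ (Iic 0) = 0) : ∀ᵐ t ∂μ, 0 < t :=
  (mem_ae_iff.2 (by rwa [compl_Ioi]) : Ioi (0 : ℝ) ∈ ae μ)

lemma integrable_mul_exp_neg_mul [IsFiniteMeasure μ] (hμ : ∀ᵐ t ∂μ, 0 ≤ t) {α : ℝ}
    (hα : 0 < α) : Integrable (fun t => t * Real.exp (-α * t)) μ := by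
  refine Integrable.mono' (integrable_const α⁻¹) (by fun_prop) ?_
  filter_upwards [hμ] with t ht
  rw [Real.norm_of_nonneg (by positivity)]
  exact Real.mul_exp_neg_mul_le_inv hα t

lemma integral_mul_exp_neg_mul_pos [IsFiniteMeasure μ] [NeZero μ] (hμ : ∀ᵐ t ∂μ, 0 < t)
    {α : ℝ} (hα : 0 < α) : 0 < ∫ t, t * Real.exp (-α * t) ∂μ := by
  have hpos : ∀ᵐ t ∂μ, 0 < t * Real.exp (-α * t) := hμ.mono fun t ht => by positivity
  rw [integral_pos_iff_support_of_nonneg_ae (hpos.mono fun _ h => h.le)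
    (integrable_mul_exp_neg_mul (hμ.mono fun _ h => h.le) hα)]
  refine pos_iff_ne_zero.2 fun h => ?_
  obtain ⟨t, hft, ht⟩ := (hpos.and (measure_eq_zero_iff_ae_notMem.1 h)).exists
  exact ht hft.ne'

theorem hasDerivAt_laplaceTransform [IsFiniteMeasure μ] (hμ : ∀ᵐ t ∂μ, 0 ≤ t) {s : ℂ}
    (hs : 0 < s.re) :
    HasDerivAt (laplaceTransform μ) (-∫ t, t * Complex.exp (-s * t) ∂μ) s := by
  have hre : ∀ z ∈ ball s (s.re / 2), s.re / 2 < z.re := fun z hz => by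
    have := (Complex.abs_re_le_norm (z - s)).trans_lt (mem_ball_iff_norm.1 hz)
    rw [Complex.sub_re] at this
    linarith [neg_abs_le (z.re - s.re)]
  have hderiv := hasDerivAt_integral_of_dominated_loc_of_deriv_le
    (F := fun z (t : ℝ) => Complex.exp (-z * t))
    (F' := fun z (t : ℝ) => -(t * Complex.exp (-z * t)))
    (μ := μ) (bound := fun _ => 2 / s.re) (ball_mem_nhds s (half_pos hs))
    (.of_forall fun z => (by fun_prop : Continuous _).aestronglyMeasurable) ?_
    (by fun_prop : Continuous _).aestronglyMeasurable ?_ (integrable_const _) ?_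
  · rw [← integral_neg]
    exact hderiv.2
  · refine Integrable.mono' (integrable_const 1)
      (by fun_prop : Continuous _).aestronglyMeasurable ?_
    filter_upwards [hμ] with t ht
    rw [Complex.norm_exp_neg_mul_ofReal, Real.exp_le_one_iff]
    nlinarith
  · filter_upwards [hμ] with t ht z hz
    have hz := hre z hz
    rw [norm_neg, norm_mul, Complex.norm_exp_neg_mul_ofReal, Complex.norm_real,
      Real.norm_of_nonneg ht]
    calc t * Real.exp (-z.re * t) ≤ z.re⁻¹ := Real.mul_exp_neg_mul_le_inv (by linarith) t
      _ ≤ 2 / s.re := by rw [inv_le_comm₀ (by linarith) (by positivity), inv_div]; linarith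
  · filter_upwards with t z _
    exact ((hasDerivAt_neg z).mul_const (t : ℂ)).cexp.congr_deriv (by ring)

theorem hasDerivAt_laplaceTransform_ofReal [IsFiniteMeasure μ] (hμ : ∀ᵐ t ∂μ, 0 ≤ t) {α : ℝ}
    (hα : 0 < α) :
    HasDerivAt (laplaceTransform μ) (-(∫ t, t * Real.exp (-α * t) ∂μ : ℝ)) α := by
  convert hasDerivAt_laplaceTransform hμ (s := α) (by simpa using hα) using 2
  rw [← integral_complex_ofReal]
  push_cast
  rfl

theorem hasDerivAt_one_sub_laplaceTransform_sub_laplaceTransform {ν : Measure ℝ}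
    [IsFiniteMeasure μ] [IsFiniteMeasure ν] (hμ : ∀ᵐ t ∂μ, 0 ≤ t) (hν : ∀ᵐ t ∂ν, 0 ≤ t) {α : ℝ}
    (hα : 0 < α) :
    HasDerivAt (fun s => 1 - laplaceTransform μ s - laplaceTransform ν s)
      (∫ t, t * Real.exp (-α * t) ∂(μ + ν) : ℝ) α := by
  refine (((hasDerivAt_const _ 1).sub (hasDerivAt_laplaceTransform_ofReal hμ hα)).sub
    (hasDerivAt_laplaceTransform_ofReal hν hα)).congr_deriv ?_
  rw [integral_add_measure (integrable_mul_exp_neg_mul hμ hα) (integrable_mul_exp_neg_mul hν hα)]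
  push_cast
  ring

end LaplaceTransform

theorem tendsto_sub_mul_div_mul_of_hasDerivAt {𝕜 : Type*} [NontriviallyNormedField 𝕜]
    {ψ g : 𝕜 → 𝕜} {a d : 𝕜} (hψ : HasDerivAt ψ d a) (hψa : ψ a = 0) (hd : d ≠ 0) (ha : a ≠ 0)
    (hg : ContinuousAt g a) :
    Tendsto (fun s => (s - a) * (g s / (s * ψ s))) (𝓝[≠] a) (𝓝 (g a / (a * d))) := by
  have hslope : Tendsto (fun s => (s - a) / ψ s) (𝓝[≠] a) (𝓝 d⁻¹) :=
    ((hasDerivAt_iff_tendsto_slope.1 hψ).inv₀ hd).congr fun s => by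
      rw [slope_def_field, hψa, sub_zero, inv_div]
  have hquot : Tendsto (fun s => g s / s) (𝓝[≠] a) (𝓝 (g a / a)) :=
    ((hg.div continuousAt_id ha).tendsto).mono_left nhdsWithin_le_nhds
  convert hquot.mul hslope using 1
  · ext s; ring
  · rw [← div_div, div_eq_mul_inv]

/-- Let `α > 0` be the real root of `ψ` and
`ψ'(α) = ∫ t e^{-αt} d(P+Q)`. Then each of
`m_f*(s) = (1-p*(s))(1-q*(s))/(s ψ(s))`, `m_g*(s) = (1-p*(s))q*(s)/(s ψ(s))`,
`n_f*(s) = (1-q*(s))p*(s)/(s ψ(s))` has a simple pole at `s = α`: as `s → α` with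
`Re s > 0`, `s ≠ α`, we have `(s-α)·m_f*(s) → p*(α)q*(α)/(α ψ'(α))`,
`(s-α)·m_g*(s) → q*(α)²/(α ψ'(α))`, and `(s-α)·n_f*(s) → p*(α)²/(α ψ'(α))`. -/
theorem stmt3
    (P Q : Measure ℝ) [IsProbabilityMeasure P] [IsProbabilityMeasure Q]
    (hP : P (Set.Iic 0) = 0) (hQ : Q (Set.Iic 0) = 0)
    (pstar qstar ψ : ℂ → ℂ)
    (hpstar : ∀ s : ℂ, pstar s = ∫ t, Complex.exp (-s * (t : ℂ)) ∂P)
    (hqstar : ∀ s : ℂ, qstar s = ∫ t, Complex.exp (-s * (t : ℂ)) ∂Q)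
    (hψ : ∀ s : ℂ, ψ s = 1 - pstar s - qstar s)
    (α : ℝ) (hα : 0 < α) (hroot : ψ (α : ℂ) = 0)
    (ψ' : ℝ) (hψ' : ψ' = ∫ t, t * Real.exp (-α * t) ∂(P + Q)) :
    Tendsto (fun s : ℂ => (s - (α : ℂ)) * ((1 - pstar s) * (1 - qstar s) / (s * ψ s)))
      (nhdsWithin (α : ℂ) {s : ℂ | 0 < s.re ∧ s ≠ (α : ℂ)})
      (nhds (pstar (α : ℂ) * qstar (α : ℂ) / ((α : ℂ) * (ψ' : ℂ)))) ∧
    Tendsto (fun s : ℂ => (s - (α : ℂ)) * ((1 - pstar s) * qstar s / (s * ψ s)))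
      (nhdsWithin (α : ℂ) {s : ℂ | 0 < s.re ∧ s ≠ (α : ℂ)})
      (nhds (qstar (α : ℂ) ^ 2 / ((α : ℂ) * (ψ' : ℂ)))) ∧
    Tendsto (fun s : ℂ => (s - (α : ℂ)) * ((1 - qstar s) * pstar s / (s * ψ s)))
      (nhdsWithin (α : ℂ) {s : ℂ | 0 < s.re ∧ s ≠ (α : ℂ)})
      (nhds (pstar (α : ℂ) ^ 2 / ((α : ℂ) * (ψ' : ℂ)))) := by
  obtain rfl : pstar = laplaceTransform P := funext hpstar
  obtain rfl : qstar = laplaceTransform Q := funext hqstar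
  have hP0 := (ae_pos_of_measure_Iic_eq_zero hP).mono fun _ => le_of_lt
  have hQ0 := (ae_pos_of_measure_Iic_eq_zero hQ).mono fun _ => le_of_lt
  have hderiv : HasDerivAt ψ ψ' α := by
    rw [funext hψ, hψ']
    exact hasDerivAt_one_sub_laplaceTransform_sub_laplaceTransform hP0 hQ0 hα
  have : NeZero (P + Q) := ⟨fun h => by simpa using congrArg (· univ) h⟩
  have hψ'_ne : (ψ' : ℂ) ≠ 0 := Complex.ofReal_ne_zero.2 <| ne_of_gt <|
    hψ' ▸ integral_mul_exp_neg_mul_pos (ae_pos_of_measure_Iic_eq_zero (by simp [hP, hQ])) hα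
  have pole : ∀ g : ℂ → ℂ, ContinuousAt g α → Tendsto (fun s => (s - α) * (g s / (s * ψ s)))
      (𝓝[{s : ℂ | 0 < s.re ∧ s ≠ α}] α) (𝓝 (g α / (α * ψ'))) := fun g hg =>
    (tendsto_sub_mul_div_mul_of_hasDerivAt hderiv hroot hψ'_ne (Complex.ofReal_ne_zero.2 hα.ne')
      hg).mono_left (nhdsWithin_mono _ fun _ hs => hs.2)
  have hpc := (hasDerivAt_laplaceTransform_ofReal hP0 hα).continuousAt
  have hqc := (hasDerivAt_laplaceTransform_ofReal hQ0 hα).continuousAt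
  have hsum : laplaceTransform P α + laplaceTransform Q α = 1 := by
    linear_combination hψ α - hroot
  refine ⟨?_, ?_, ?_⟩
  · convert pole (fun s => (1 - laplaceTransform P s) * (1 - laplaceTransform Q s)) (by fun_prop)
      using 3
    linear_combination hsum
  · convert pole (fun s => (1 - laplaceTransform P s) * laplaceTransform Q s) (by fun_prop) using 3
    linear_combination laplaceTransform Q α * hsum
  · convert pole (fun s => (1 - laplaceTransform Q s) * laplaceTransform P s) (by fun_prop) using 3
    linear_combination laplaceTransform P α * hsum
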